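/- Let b > 0 be real, let c ≥ 1 be real, let n ≥ 2 be a natural number, and let X be a random integer distributed according to the symmetric geometric distribution with parameter b. Then P(|X| > 1 + (c · ln n)/b) ≤ 1/n^c; that is, with probability at least 1 − 1/n^c, |X| ≤ 1 + (c · ln n)/b. -/

import Mathlib

open MeasureTheory Real

/-- Let `b > 0`, `c ≥ 1`, `n ≥ 2` a natural number, and let `X` be distributed according to
the symmetric geometric distribution with parameter `b`. Then
`P(|X| > 1 + c * ln n / b) ≤ 1 / n ^ c`; i.e. with probability at least `1 - 1/n^c`,
`|X| ≤ 1 + c * ln n / b`. -/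
theorem symmGeom_whp_bound
    (b : ℝ) (hb : 0 < b) (c : ℝ) (hc : 1 ≤ c) (n : ℕ) (hn : 2 ≤ n)
    {Ω : Type*} [MeasurableSpace Ω] (μ : Measure Ω) [IsProbabilityMeasure μ]
    (X : Ω → ℤ)
    (hpmf : ∀ i : ℤ, μ {ω | X ω = i}
      = ENNReal.ofReal (((Real.exp b - 1) / (Real.exp b + 1)) * Real.exp (-b * |(i : ℝ)|))) :
    μ {ω | 1 + c * Real.log n / b < |(X ω : ℝ)|} ≤ ENNReal.ofReal (1 / (n : ℝ) ^ c) := by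
  have hn1 : (1:ℝ) < n := by
    have : (2:ℝ) ≤ n := by exact_mod_cast hn
    linarith
  have hlog : 0 < Real.log n := Real.log_pos hn1
  set t : ℝ := 1 + c * Real.log n / b with ht
  have ht1 : 1 ≤ t := by
    have h0 : 0 ≤ c * Real.log n / b := by positivity
    rw [ht]; linarith
  set K : ℤ := ⌊t⌋ + 1 with hK
  have hK1 : (1:ℤ) ≤ ⌊t⌋ := Int.le_floor.mpr (by exact_mod_cast ht1)
  have hKpos : (1:ℤ) ≤ K := by omega
  have hKt : t - 1 < ((K:ℝ) - 1) := by
    have := Int.sub_one_lt_floor t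
    have hc1 : ((K:ℤ):ℝ) = (⌊t⌋:ℝ) + 1 := by push_cast [hK]; ring
    rw [hc1]; linarith
  set C : ℝ := (Real.exp b - 1) / (Real.exp b + 1) with hC
  have hexp1 : 1 < Real.exp b := Real.one_lt_exp_iff.mpr hb
  have hCpos : 0 ≤ C := div_nonneg (by linarith) (by linarith [Real.exp_pos b])
  have hr0 : 0 ≤ Real.exp (-b) := (Real.exp_pos _).le
  have hr1 : Real.exp (-b) < 1 := by
    rw [Real.exp_lt_one_iff]; linarith
  set S : ℝ := C * Real.exp (-b * K) / (1 - Real.exp (-b)) with hS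
  -- one-sided tail bound
  have hside : ∀ (g : ℕ → ℤ), (∀ j : ℕ, |((g j : ℤ):ℝ)| = (K:ℝ) + j) →
      μ (⋃ j : ℕ, {ω | X ω = g j}) ≤ ENNReal.ofReal S := by
    intro g hg
    refine le_trans (measure_iUnion_le _) ?_
    have hterm : ∀ j : ℕ, μ {ω | X ω = g j}
        = ENNReal.ofReal ((C * Real.exp (-b * K)) * (Real.exp (-b))^j) := by
      intro j
      rw [hpmf (g j), hg j]
      congr 1
      have he : Real.exp (-b * ((K:ℝ) + j)) = Real.exp (-b * K) * Real.exp (-b) ^ j := by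
        rw [← Real.exp_nat_mul, ← Real.exp_add]
        congr 1
        ring
      rw [he]
      ring
    calc ∑' j : ℕ, μ {ω | X ω = g j}
        = ∑' j : ℕ, ENNReal.ofReal ((C * Real.exp (-b * K)) * (Real.exp (-b))^j) := by
          exact tsum_congr hterm
      _ = ENNReal.ofReal (∑' j : ℕ, (C * Real.exp (-b * K)) * (Real.exp (-b))^j) := by
          refine (ENNReal.ofReal_tsum_of_nonneg (fun j => ?_) ?_).symm
          · positivity
          · exact (summable_geometric_of_lt_one hr0 hr1).mul_left _
      _ = ENNReal.ofReal S := by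
          congr 1
          rw [tsum_mul_left, tsum_geometric_of_lt_one hr0 hr1, hS, div_eq_mul_inv]
      _ ≤ ENNReal.ofReal S := le_refl _
  -- subset
  have hsub : {ω | t < |(X ω : ℝ)|} ⊆
      (⋃ j : ℕ, {ω | X ω = K + j}) ∪ (⋃ j : ℕ, {ω | X ω = -(K + j)}) := by
    intro ω hω
    simp only [Set.mem_setOf_eq] at hω
    have habs : ((|X ω| : ℤ) : ℝ) = |((X ω : ℤ):ℝ)| := by push_cast; ring
    have h1 : t < ((|X ω| : ℤ) : ℝ) := by rw [habs]; exact hω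
    have h2 : K ≤ |X ω| := by
      have := Int.floor_lt.mpr h1
      omega
    rcases abs_cases (X ω) with ⟨he, _⟩ | ⟨he, _⟩
    · left
      refine Set.mem_iUnion.mpr ⟨(X ω - K).toNat, ?_⟩
      simp only [Set.mem_setOf_eq]
      omega
    · right
      refine Set.mem_iUnion.mpr ⟨(-X ω - K).toNat, ?_⟩
      simp only [Set.mem_setOf_eq]
      omega
  have hKj : ∀ j : ℕ, (0:ℝ) ≤ (K:ℝ) + j := by
    intro j
    have : (1:ℝ) ≤ (K:ℝ) := by exact_mod_cast hKpos
    positivity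
  have hpos : μ (⋃ j : ℕ, {ω | X ω = K + j}) ≤ ENNReal.ofReal S := by
    refine hside _ (fun j => ?_)
    push_cast
    rw [abs_of_nonneg (hKj j)]
  have hneg : μ (⋃ j : ℕ, {ω | X ω = -(K + j)}) ≤ ENNReal.ofReal S := by
    refine hside _ (fun j => ?_)
    push_cast
    rw [abs_neg, abs_of_nonneg (hKj j)]
  have hSnonneg : 0 ≤ S := by
    apply div_nonneg
    · positivity
    · linarith
  calc μ {ω | t < |(X ω : ℝ)|}
      ≤ μ ((⋃ j : ℕ, {ω | X ω = K + j}) ∪ (⋃ j : ℕ, {ω | X ω = -(K + j)})) :=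
        measure_mono hsub
    _ ≤ μ (⋃ j : ℕ, {ω | X ω = K + j}) + μ (⋃ j : ℕ, {ω | X ω = -(K + j)}) :=
        measure_union_le _ _
    _ ≤ ENNReal.ofReal S + ENNReal.ofReal S := add_le_add hpos hneg
    _ = ENNReal.ofReal (S + S) := (ENNReal.ofReal_add hSnonneg hSnonneg).symm
    _ ≤ ENNReal.ofReal (1 / (n : ℝ) ^ c) := by
        apply ENNReal.ofReal_le_ofReal
        -- compute S
        have hden : 1 - Real.exp (-b) = (Real.exp b - 1) * Real.exp (-b) := by
          rw [mul_comm, mul_sub, ← Real.exp_add]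
          simp
        have hSeq : S = Real.exp (-b * ((K:ℝ) - 1)) / (Real.exp b + 1) := by
          have hA : Real.exp (-b * ((K:ℝ) - 1)) = Real.exp (-b * K) * Real.exp b := by
            rw [← Real.exp_add]; congr 1; ring
          have hinv : Real.exp (-b) = (Real.exp b)⁻¹ := by rw [← Real.exp_neg]
          have h1 : Real.exp b ≠ 0 := (Real.exp_pos b).ne'
          have h2 : Real.exp b - 1 ≠ 0 := by linarith
          have h3 : Real.exp b + 1 ≠ 0 := by linarith [Real.exp_pos b]
          rw [hS, hC, hA, hinv]
          field_simp
        have h2S : S + S ≤ Real.exp (-b * ((K:ℝ) - 1)) := by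
          rw [hSeq]
          rw [← add_div, div_le_iff₀ (by linarith [Real.exp_pos b])]
          have hE : 0 ≤ Real.exp (-b * ((K:ℝ) - 1)) := (Real.exp_pos _).le
          nlinarith
        have hmono : Real.exp (-b * ((K:ℝ) - 1)) ≤ Real.exp (-b * (t - 1)) := by
          apply Real.exp_le_exp.mpr
          nlinarith
        have hrpow : Real.exp (-b * (t - 1)) = 1 / (n : ℝ) ^ c := by
          have hteq : t - 1 = c * Real.log n / b := by rw [ht]; ring
          rw [hteq]
          have : -b * (c * Real.log n / b) = Real.log n * (-c) := by
            field_simp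
          rw [this, ← Real.rpow_def_of_pos (by linarith : (0:ℝ) < n)]
          rw [Real.rpow_neg (by linarith : (0:ℝ) ≤ n), one_div]
        linarith
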